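/- arXiv:2003.04040 — 5 statements merged into one kernel-verified Lean document; each statement's English description precedes it below -/
import Mathlib

section
/- Let d ≥ 1 be an integer, δ > 1, 0 < γ < δ/(δ+1), β > 0 and q > 0. Define ρ : [0,∞) → [0,1] by ρ(r) = min(1, q·r^(−δ)) for r > 0 (and ρ(0) = 1), and set I_ρ = ∫_{ℝ^d} ρ(|z|^d) dz. Let s, t ∈ (0,1] with s ≤ t, and let x, y ∈ ℝ^d satisfy |x−y|^d ≥ q^(1/δ) · β · s^(−γ) · t^(γ−1). Then ∫_t^1 ∫_{ℝ^d} ρ(β^(−1) t^γ u^(1−γ) |x−z|^d) · ρ(β^(−1) s^γ u^(1−γ) |z−y|^d) dz du ≤ I_ρ · C₁ · q · (β^(−1) s^γ t^(1−γ) |x−y|^d)^(−δ), where C₁ = β·2^(dδ+1)/(δ(1−γ)−γ). -/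
/-!
Fix `u > t` and write `a = β⁻¹ t^γ u^(1-γ)`, `b = β⁻¹ s^γ u^(1-γ)`. By the triangle inequality one
of `‖x - z‖`, `‖z - y‖` is at least `‖x - y‖ / 2`, so the product `ρ(a‖x - z‖^d) ρ(b‖z - y‖^d)` is
at most `q (a (‖x - y‖/2)^d)^(-δ) ρ(b‖z - y‖^d) + q (b (‖x - y‖/2)^d)^(-δ) ρ(a‖x - z‖^d)`.
Translating and rescaling `z`, each remaining profile integrates to `I_ρ` divided by its weight,
so the inner integral is at most `I_ρ` times a multiple of `u^(-(1-γ)(δ+1))`; since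
`γ < δ / (δ + 1)` this is integrable on `(t, ∞)`, and the powers of `t` combine exactly into
`t^(-(1-γ)δ)`.
-/

open MeasureTheory Module Set

noncomputable def powerProfile (q δ r : ℝ) : ℝ := min 1 (q * r ^ (-δ))

section powerProfile

variable {q δ r : ℝ}

lemma powerProfile_le_one : powerProfile q δ r ≤ 1 := min_le_left _ _

lemma powerProfile_le : powerProfile q δ r ≤ q * r ^ (-δ) := min_le_right _ _

lemma powerProfile_nonneg (hq : 0 ≤ q) (hr : 0 ≤ r) : 0 ≤ powerProfile q δ r :=
  le_min zero_le_one (mul_nonneg hq (Real.rpow_nonneg hr _))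

lemma measurable_powerProfile : Measurable (powerProfile q δ) := by
  unfold powerProfile
  fun_prop

lemma powerProfile_le_of_le {r₀ : ℝ} (hq : 0 ≤ q) (hδ : 0 ≤ δ) (hr₀ : 0 < r₀) (h : r₀ ≤ r) :
    powerProfile q δ r ≤ q * r₀ ^ (-δ) :=
  powerProfile_le.trans <|
    mul_le_mul_of_nonneg_left (Real.rpow_le_rpow_of_nonpos hr₀ h (neg_nonpos.2 hδ)) hq

lemma powerProfile_pow_le {n : ℕ} (hq : 0 ≤ q) (hδ : 0 ≤ δ) (hr : 0 ≤ r) :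
    powerProfile q δ (r ^ n) ≤ (1 + q) * 2 ^ (n * δ) * (1 + r) ^ (-(n * δ)) := by
  have hnδ : 0 ≤ (n : ℝ) * δ := by positivity
  have two_rpow : (2 : ℝ) ^ (n * δ) * 2 ^ (-(n * δ)) = 1 := by
    rw [← Real.rpow_add two_pos, add_neg_cancel, Real.rpow_zero]
  rcases le_total r 1 with hr1 | hr1
  · calc powerProfile q δ (r ^ n) ≤ 1 + q := powerProfile_le_one.trans (by linarith)
      _ = (1 + q) * 2 ^ (n * δ) * 2 ^ (-(n * δ)) := by rw [mul_assoc, two_rpow, mul_one]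
      _ ≤ (1 + q) * 2 ^ (n * δ) * (1 + r) ^ (-(n * δ)) := mul_le_mul_of_nonneg_left
          (Real.rpow_le_rpow_of_nonpos (by positivity) (by linarith) (neg_nonpos.2 hnδ))
          (by positivity)
  · calc powerProfile q δ (r ^ n) ≤ q * r ^ (-(n * δ)) := by
          rw [← mul_neg, Real.rpow_natCast_mul hr]
          exact powerProfile_le
      _ ≤ (1 + q) * (2 ^ (n * δ) * 2 ^ (-(n * δ))) * r ^ (-(n * δ)) := by
        rw [two_rpow, mul_one]
        gcongr
        linarith
      _ = (1 + q) * 2 ^ (n * δ) * (2 * r) ^ (-(n * δ)) := by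
        rw [Real.mul_rpow zero_le_two hr]
        ring
      _ ≤ (1 + q) * 2 ^ (n * δ) * (1 + r) ^ (-(n * δ)) := mul_le_mul_of_nonneg_left
          (Real.rpow_le_rpow_of_nonpos (by positivity) (by linarith) (neg_nonpos.2 hnδ))
          (by positivity)

lemma powerProfile_mul_powerProfile_le {E : Type*} [SeminormedAddCommGroup E] (hq : 0 ≤ q)
    (hδ : 0 ≤ δ) {n : ℕ} {a b : ℝ} (ha : 0 < a) (hb : 0 < b) {x y : E} (hxy : 0 < ‖x - y‖)
    (z : E) :
    powerProfile q δ (a * ‖x - z‖ ^ n) * powerProfile q δ (b * ‖z - y‖ ^ n) ≤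
      q * (a * (‖x - y‖ / 2) ^ n) ^ (-δ) * powerProfile q δ (b * ‖z - y‖ ^ n) +
        q * (b * (‖x - y‖ / 2) ^ n) ^ (-δ) * powerProfile q δ (a * ‖x - z‖ ^ n) := by
  have hx := powerProfile_nonneg (δ := δ) hq (by positivity : 0 ≤ a * ‖x - z‖ ^ n)
  have hy := powerProfile_nonneg (δ := δ) hq (by positivity : 0 ≤ b * ‖z - y‖ ^ n)
  have hA : 0 ≤ q * (a * (‖x - y‖ / 2) ^ n) ^ (-δ) := by positivity
  have hB : 0 ≤ q * (b * (‖x - y‖ / 2) ^ n) ^ (-δ) := by positivity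
  have hxz := norm_sub_le_norm_sub_add_norm_sub x z y
  rcases le_total (‖x - y‖ / 2) ‖x - z‖ with hfar | hnear
  · have hdecay := powerProfile_le_of_le hq hδ (by positivity)
      (by gcongr : a * (‖x - y‖ / 2) ^ n ≤ a * ‖x - z‖ ^ n)
    linarith [mul_le_mul_of_nonneg_right hdecay hy, mul_nonneg hB hx]
  · have hdecay := powerProfile_le_of_le hq hδ (by positivity)
      (by gcongr; linarith : b * (‖x - y‖ / 2) ^ n ≤ b * ‖z - y‖ ^ n)
    linarith [mul_le_mul_of_nonneg_left hdecay hx, mul_nonneg hA hy]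

end powerProfile

lemma commonNeighbour_weight_le {s t u β γ δ R : ℝ} (hs : 0 < s) (hst : s ≤ t) (hu : 0 < u)
    (hβ : 0 < β) (hγ : 0 ≤ γ) (hδ : 1 ≤ δ) (hR : 0 < R) :
    (β⁻¹ * t ^ γ * u ^ (1 - γ) * R) ^ (-δ) * (β⁻¹ * s ^ γ * u ^ (1 - γ))⁻¹ +
        (β⁻¹ * s ^ γ * u ^ (1 - γ) * R) ^ (-δ) * (β⁻¹ * t ^ γ * u ^ (1 - γ))⁻¹ ≤
      2 * β ^ (δ + 1) * s ^ (-(γ * δ)) * t ^ (-γ) * R ^ (-δ) * u ^ (-((1 - γ) * (δ + 1))) := by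
  have ht : 0 < t := hs.trans_le hst
  have hlog : Real.log s ≤ Real.log t := Real.log_le_log hs hst
  have hx_far : (β⁻¹ * t ^ γ * u ^ (1 - γ) * R) ^ (-δ) * (β⁻¹ * s ^ γ * u ^ (1 - γ))⁻¹ ≤
      β ^ (δ + 1) * s ^ (-(γ * δ)) * t ^ (-γ) * R ^ (-δ) * u ^ (-((1 - γ) * (δ + 1))) := by
    rw [← Real.log_le_log_iff (by positivity) (by positivity)]
    simp (disch := positivity) only [Real.log_mul, Real.log_rpow, Real.log_inv]
    linarith [mul_nonneg (mul_nonneg hγ (sub_nonneg.2 hδ)) (sub_nonneg.2 hlog)]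
  have hy_far : (β⁻¹ * s ^ γ * u ^ (1 - γ) * R) ^ (-δ) * (β⁻¹ * t ^ γ * u ^ (1 - γ))⁻¹ =
      β ^ (δ + 1) * s ^ (-(γ * δ)) * t ^ (-γ) * R ^ (-δ) * u ^ (-((1 - γ) * (δ + 1))) := by
    refine Real.log_injOn_pos (mem_Ioi.2 (by positivity)) (mem_Ioi.2 (by positivity)) ?_
    simp (disch := positivity) only [Real.log_mul, Real.log_rpow, Real.log_inv]
    ring
  linarith

lemma commonNeighbour_constant_eq {s t β γ δ r : ℝ} {n : ℕ} (hs : 0 < s) (ht : 0 < t)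
    (hβ : 0 < β) (hr : 0 < r) :
    2 * β ^ (δ + 1) * s ^ (-(γ * δ)) * t ^ (-γ) * ((r / 2) ^ n) ^ (-δ) *
        t ^ (1 - (1 - γ) * (δ + 1)) =
      β * 2 ^ ((n : ℝ) * δ + 1) * (β⁻¹ * s ^ γ * t ^ (1 - γ) * r ^ n) ^ (-δ) := by
  refine Real.log_injOn_pos (mem_Ioi.2 (by positivity)) (mem_Ioi.2 (by positivity)) ?_
  simp (disch := positivity) only [Real.log_mul, Real.log_rpow, Real.log_inv, Real.log_pow,
    Real.log_div]
  ring

lemma lintegral_Ioi_ofReal_rpow_neg {t p : ℝ} (ht : 0 < t) (hp : 1 < p) :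
    ∫⁻ u in Ioi t, ENNReal.ofReal (u ^ (-p)) = ENNReal.ofReal (t ^ (1 - p) / (p - 1)) := by
  rw [← ofReal_integral_eq_lintegral_ofReal (integrableOn_Ioi_rpow_of_lt (by linarith) ht)
    ((ae_restrict_iff' measurableSet_Ioi).2 (ae_of_all _ fun u hu ↦
      Real.rpow_nonneg (ht.trans hu).le _)), integral_Ioi_rpow_of_lt (by linarith) ht]
  congr 1
  rw [neg_div, ← div_neg]
  ring_nf

section Haar

variable {E : Type*} [NormedAddCommGroup E] [NormedSpace ℝ E] [FiniteDimensional ℝ E]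
  [MeasurableSpace E] [BorelSpace E] (μ : Measure E) [μ.IsAddHaarMeasure] {n : ℕ}

lemma integrable_powerProfile_norm_pow {q δ : ℝ} (hq : 0 ≤ q) (hn : (finrank ℝ E : ℝ) < n * δ) :
    Integrable (fun z : E ↦ powerProfile q δ (‖z‖ ^ n)) μ := by
  have hδ : 0 ≤ δ := (pos_of_mul_pos_right ((Nat.cast_nonneg _).trans_lt hn) n.cast_nonneg).le
  refine ((integrable_one_add_norm hn).const_mul ((1 + q) * 2 ^ (n * δ))).mono'
    (measurable_powerProfile.comp (by fun_prop)).aestronglyMeasurable (ae_of_all _ fun z ↦ ?_)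
  rw [Real.norm_of_nonneg (powerProfile_nonneg hq (by positivity))]
  exact powerProfile_pow_le hq hδ (norm_nonneg z)

lemma lintegral_comp_mul_norm_sub_pow [Nontrivial E] (hn : finrank ℝ E = n) (g : ℝ → ENNReal)
    {c : ℝ} (hc : 0 < c) (w : E) :
    ∫⁻ z, g (c * ‖z - w‖ ^ n) ∂μ = ENNReal.ofReal c⁻¹ * ∫⁻ z, g (‖z‖ ^ n) ∂μ := by
  have hn0 : (n : ℝ) ≠ 0 := by rw [← hn]; exact_mod_cast finrank_pos.ne'
  set R := c ^ (n : ℝ)⁻¹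
  have hR : 0 < R := by positivity
  have hRn : R ^ n = c := by
    rw [← Real.rpow_natCast, ← Real.rpow_mul hc.le, inv_mul_cancel₀ hn0, Real.rpow_one]
  have hscale (z : E) : c * ‖z‖ ^ n = ‖R • z‖ ^ n := by
    rw [norm_smul, Real.norm_of_nonneg hR.le, mul_pow, hRn]
  rw [lintegral_sub_right_eq_self (fun z ↦ g (c * ‖z‖ ^ n)) w]
  simp_rw [hscale]
  calc ∫⁻ z, g (‖R • z‖ ^ n) ∂μ = ∫⁻ z, g (‖z‖ ^ n) ∂μ.map (R • ·) :=
        (lintegral_map_equiv (fun z ↦ g (‖z‖ ^ n))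
          (Homeomorph.smul (Units.mk0 R hR.ne')).toMeasurableEquiv).symm
    _ = ENNReal.ofReal c⁻¹ * ∫⁻ z, g (‖z‖ ^ n) ∂μ := by
        rw [Measure.map_addHaar_smul μ hR.ne', lintegral_smul_measure, hn, hRn,
          abs_of_pos (inv_pos.2 hc), smul_eq_mul]

lemma lintegral_powerProfile_mul_powerProfile_le [Nontrivial E] (hn : finrank ℝ E = n)
    {q δ a b : ℝ} (hq : 0 ≤ q) (hδ : 0 ≤ δ) (ha : 0 < a) (hb : 0 < b) {x y : E} (hxy : x ≠ y) :
    ∫⁻ z, ENNReal.ofReal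
        (powerProfile q δ (a * ‖x - z‖ ^ n) * powerProfile q δ (b * ‖z - y‖ ^ n)) ∂μ ≤
      ENNReal.ofReal (q * (a * (‖x - y‖ / 2) ^ n) ^ (-δ) * b⁻¹ +
          q * (b * (‖x - y‖ / 2) ^ n) ^ (-δ) * a⁻¹) *
        ∫⁻ z, ENNReal.ofReal (powerProfile q δ (‖z‖ ^ n)) ∂μ := by
  set A := q * (a * (‖x - y‖ / 2) ^ n) ^ (-δ)
  set B := q * (b * (‖x - y‖ / 2) ^ n) ^ (-δ)
  have hA : 0 ≤ A := by positivity
  have hB : 0 ≤ B := by positivity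
  have hφ (c : ℝ) (hc : 0 < c) (w z : E) : 0 ≤ powerProfile q δ (c * ‖z - w‖ ^ n) :=
    powerProfile_nonneg hq (by positivity)
  have hmeas (c : ℝ) (w : E) :
      Measurable fun z : E ↦ ENNReal.ofReal (powerProfile q δ (c * ‖z - w‖ ^ n)) :=
    ENNReal.measurable_ofReal.comp (measurable_powerProfile.comp (by fun_prop))
  have hscale (c : ℝ) (hc : 0 < c) (w : E) :=
    lintegral_comp_mul_norm_sub_pow μ hn (fun r ↦ ENNReal.ofReal (powerProfile q δ r)) hc w
  calc _ ≤ ∫⁻ z, ENNReal.ofReal A * ENNReal.ofReal (powerProfile q δ (b * ‖z - y‖ ^ n)) +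
          ENNReal.ofReal B * ENNReal.ofReal (powerProfile q δ (a * ‖z - x‖ ^ n)) ∂μ := by
        refine lintegral_mono fun z ↦ ?_
        rw [← ENNReal.ofReal_mul hA, ← ENNReal.ofReal_mul hB,
          ← ENNReal.ofReal_add (mul_nonneg hA (hφ b hb y z)) (mul_nonneg hB (hφ a ha x z)),
          norm_sub_rev z x]
        exact ENNReal.ofReal_le_ofReal <| powerProfile_mul_powerProfile_le hq hδ ha hb
          (norm_pos_iff.2 (sub_ne_zero.2 hxy)) z
    _ = _ := by
        rw [lintegral_add_left ((hmeas b y).const_mul _), lintegral_const_mul _ (hmeas b y),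
          lintegral_const_mul _ (hmeas a x), hscale b hb, hscale a ha,
          ENNReal.ofReal_add (by positivity) (by positivity), ENNReal.ofReal_mul hA,
          ENNReal.ofReal_mul hB]
        ring

lemma lintegral_Ioi_commonNeighbour_le [Nontrivial E] (hn : finrank ℝ E = n)
    {q δ γ β s t : ℝ} (hq : 0 ≤ q) (hδ : 1 < δ) (hγ0 : 0 ≤ γ) (hγ : γ < δ / (δ + 1))
    (hβ : 0 < β) (hs : 0 < s) (hst : s ≤ t) {x y : E} (hxy : x ≠ y) :
    ∫⁻ u in Ioi t, ∫⁻ z,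
        ENNReal.ofReal (powerProfile q δ (β⁻¹ * t ^ γ * u ^ (1 - γ) * ‖x - z‖ ^ n) *
          powerProfile q δ (β⁻¹ * s ^ γ * u ^ (1 - γ) * ‖z - y‖ ^ n)) ∂μ ≤
      ENNReal.ofReal ((∫ z, powerProfile q δ (‖z‖ ^ n) ∂μ) *
        (β * 2 ^ ((n : ℝ) * δ + 1) / (δ * (1 - γ) - γ)) * q *
        (β⁻¹ * s ^ γ * t ^ (1 - γ) * ‖x - y‖ ^ n) ^ (-δ)) := by
  have ht : 0 < t := hs.trans_le hst
  have hr : 0 < ‖x - y‖ := norm_pos_iff.2 (sub_ne_zero.2 hxy)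
  have hp : 1 < (1 - γ) * (δ + 1) := by
    linarith [(lt_div_iff₀ (by linarith : 0 < δ + 1)).1 hγ]
  have hI_nonneg : 0 ≤ ∫ z, powerProfile q δ (‖z‖ ^ n) ∂μ :=
    integral_nonneg fun z ↦ powerProfile_nonneg hq (by positivity)
  have hn0 : (0 : ℝ) < n := by rw [← hn]; exact_mod_cast finrank_pos
  have hL := ofReal_integral_eq_lintegral_ofReal
    (integrable_powerProfile_norm_pow μ hq (by rw [hn]; exact lt_mul_of_one_lt_right hn0 hδ))
    (ae_of_all _ fun z ↦ powerProfile_nonneg hq (by positivity))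
  set K := q * (2 * β ^ (δ + 1) * s ^ (-(γ * δ)) * t ^ (-γ) * ((‖x - y‖ / 2) ^ n) ^ (-δ))
  have hK : 0 ≤ K := by positivity
  calc _ ≤ ∫⁻ u in Ioi t, ENNReal.ofReal K * ENNReal.ofReal (u ^ (-((1 - γ) * (δ + 1)))) *
          ∫⁻ z, ENNReal.ofReal (powerProfile q δ (‖z‖ ^ n)) ∂μ := by
        refine setLIntegral_mono (by fun_prop) fun u hu ↦ ?_
        have hu : 0 < u := ht.trans hu
        refine (lintegral_powerProfile_mul_powerProfile_le μ hn hq (by linarith) (by positivity)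
          (by positivity) hxy).trans (mul_le_mul_left ?_ _)
        rw [← ENNReal.ofReal_mul hK]
        refine ENNReal.ofReal_le_ofReal ?_
        have hweight := commonNeighbour_weight_le (R := (‖x - y‖ / 2) ^ n) hs hst hu hβ hγ0
          hδ.le (by positivity)
        linarith [mul_le_mul_of_nonneg_left hweight hq]
    _ = ENNReal.ofReal (K * (t ^ (1 - (1 - γ) * (δ + 1)) / ((1 - γ) * (δ + 1) - 1))) *
          ENNReal.ofReal (∫ z, powerProfile q δ (‖z‖ ^ n) ∂μ) := by
        rw [lintegral_mul_const _ (by fun_prop), lintegral_const_mul _ (by fun_prop),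
          lintegral_Ioi_ofReal_rpow_neg ht hp, ENNReal.ofReal_mul hK, hL]
    _ = _ := by
        rw [← ENNReal.ofReal_mul' hI_nonneg, show (1 - γ) * (δ + 1) - 1 = δ * (1 - γ) - γ by ring]
        congr 1
        linear_combination (q * (∫ z, powerProfile q δ (‖z‖ ^ n) ∂μ) / (δ * (1 - γ) - γ)) *
          commonNeighbour_constant_eq (n := n) (γ := γ) (δ := δ) hs ht hβ hr

end Haar

theorem two_connection_estimate_general (d : ℕ) (hd : 1 ≤ d) (δ γ β q : ℝ) (hδ : 1 < δ)
    (hγ0 : 0 < γ) (hγ : γ < δ / (δ + 1)) (hβ : 0 < β) (hq : 0 < q)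
    (ρ : ℝ → ℝ)
    (hρ : ∀ r : ℝ, 0 < r → ρ r = min 1 (q * r ^ (-δ)))
    (s t : ℝ) (hs : 0 < s) (hst : s ≤ t)
    (x y : EuclideanSpace ℝ (Fin d))
    (hxy : q ^ (1 / δ) * β * s ^ (-γ) * t ^ (γ - 1) ≤ ‖x - y‖ ^ d) :
    ∫⁻ u in Set.Ioc t 1, ∫⁻ z : EuclideanSpace ℝ (Fin d),
        ENNReal.ofReal (ρ (β⁻¹ * t ^ γ * u ^ (1 - γ) * ‖x - z‖ ^ d) *
          ρ (β⁻¹ * s ^ γ * u ^ (1 - γ) * ‖z - y‖ ^ d)) ≤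
      ENNReal.ofReal ((∫ z : EuclideanSpace ℝ (Fin d), ρ (‖z‖ ^ d)) *
        (β * 2 ^ ((d : ℝ) * δ + 1) / (δ * (1 - γ) - γ)) * q *
        (β⁻¹ * s ^ γ * t ^ (1 - γ) * ‖x - y‖ ^ d) ^ (-δ)) := by
  have : Nonempty (Fin d) := ⟨⟨0, hd⟩⟩
  have hn : finrank ℝ (EuclideanSpace ℝ (Fin d)) = d := finrank_euclideanSpace_fin
  have hρ' (r : ℝ) (hr : 0 < r) : ρ r = powerProfile q δ r := hρ r hr
  have ht : 0 < t := hs.trans_le hst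
  have hne : x ≠ y := by
    rintro rfl
    rw [sub_self, norm_zero, zero_pow (by omega)] at hxy
    exact hxy.not_gt (by positivity)
  have hI : ∫ z : EuclideanSpace ℝ (Fin d), ρ (‖z‖ ^ d) =
      ∫ z : EuclideanSpace ℝ (Fin d), powerProfile q δ (‖z‖ ^ d) := integral_congr_ae <| by
    filter_upwards [Measure.ae_ne volume 0] with z hz using hρ' _ (pow_pos (norm_pos_iff.2 hz) d)
  calc _ ≤ ∫⁻ u in Ioi t, ∫⁻ z : EuclideanSpace ℝ (Fin d),
          ENNReal.ofReal (powerProfile q δ (β⁻¹ * t ^ γ * u ^ (1 - γ) * ‖x - z‖ ^ d) *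
            powerProfile q δ (β⁻¹ * s ^ γ * u ^ (1 - γ) * ‖z - y‖ ^ d)) := by
        refine (setLIntegral_congr_fun measurableSet_Ioc fun u hu ↦ lintegral_congr_ae ?_).trans_le
          (lintegral_mono_set Ioc_subset_Ioi_self)
        have hu : 0 < u := ht.trans hu.1
        filter_upwards [Measure.ae_ne volume x, Measure.ae_ne volume y] with z hzx hzy
        rw [hρ' _ (mul_pos (by positivity) (pow_pos (norm_pos_iff.2 (sub_ne_zero.2 hzx.symm)) d)),
          hρ' _ (mul_pos (by positivity) (pow_pos (norm_pos_iff.2 (sub_ne_zero.2 hzy)) d))]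
    _ ≤ _ := lintegral_Ioi_commonNeighbour_le volume hn hq.le hδ hγ0.le hγ hβ hs hst hne
    _ = _ := by rw [hI]

/-- Analytic content of Lemma 2.2: in the weight-dependent random connection model with
preferential attachment kernel and profile `ρ(r) = min(1, q r^(-δ))`, the expected number of
common younger neighbours of two distant vertices `(x,t)` and `(y,s)` is at most
`I_ρ · C₁` times their direct connection probability `q (β⁻¹ s^γ t^(1-γ) |x-y|^d)^(-δ)`,
where `C₁ = β 2^(dδ+1)/(δ(1-γ)-γ)` and `I_ρ = ∫_{ℝ^d} ρ(|z|^d) dz`. -/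
theorem two_connection_estimate (d : ℕ) (hd : 1 ≤ d) (δ γ β q : ℝ) (hδ : 1 < δ)
    (hγ0 : 0 < γ) (hγ : γ < δ / (δ + 1)) (hβ : 0 < β) (hq : 0 < q)
    (ρ : ℝ → ℝ) (hρ0 : ρ 0 = 1)
    (hρ : ∀ r : ℝ, 0 < r → ρ r = min 1 (q * r ^ (-δ)))
    (s t : ℝ) (hs : 0 < s) (hst : s ≤ t) (ht : t ≤ 1)
    (x y : EuclideanSpace ℝ (Fin d))
    (hxy : q ^ (1 / δ) * β * s ^ (-γ) * t ^ (γ - 1) ≤ ‖x - y‖ ^ d) :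
    ∫⁻ u in Set.Ioc t 1, ∫⁻ z : EuclideanSpace ℝ (Fin d),
        ENNReal.ofReal (ρ (β⁻¹ * t ^ γ * u ^ (1 - γ) * ‖x - z‖ ^ d) *
          ρ (β⁻¹ * s ^ γ * u ^ (1 - γ) * ‖z - y‖ ^ d)) ≤
      ENNReal.ofReal ((∫ z : EuclideanSpace ℝ (Fin d), ρ (‖z‖ ^ d)) *
        (β * 2 ^ ((d : ℝ) * δ + 1) / (δ * (1 - γ) - γ)) * q *
        (β⁻¹ * s ^ γ * t ^ (1 - γ) * ‖x - y‖ ^ d) ^ (-δ)) :=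
  two_connection_estimate_general d hd δ γ β q hδ hγ0 hγ hβ hq ρ hρ s t hs hst x y hxy
end

section
/- Let 0 < γ < 1/2 and let n ≥ 1 be an integer. Then the iterated integral ∫_0^1 dt_0 ∫_0^1 dt_1 ⋯ ∫_0^1 dt_n of the product ∏_{j=1}^n (t_{j−1} ∧ t_j)^(−γ) · (t_{j−1} ∨ t_j)^(γ−1) is at most (4/(1−2γ))^n. -/
/-!
Write `K(s, t) = (s ∧ t)^(-γ) (s ∨ t)^(γ - 1)`, so that the integral is `⟨1, Kⁿ 1⟩` for the
integral operator of `K` on `(0, 1)`. The weight `v(t) = t^(-1/2)` is a supersolution,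
`K v ≤ 4/(1 - 2γ) · v`, while `K 1 ≤ 2 v` and `∫ v = 2`. Integrating out `t_n, t_{n-1}, …, t_0`
one variable at a time therefore bounds the integral by `2 · (4/(1 - 2γ))^(n-1) · 2`, which is
at most `(4/(1 - 2γ))^n` because `4 ≤ 4/(1 - 2γ)`.
-/

open MeasureTheory Set Real
open scoped ENNReal

section PathWeight

variable {α : Type*} {k : α → α → ℝ≥0∞}

noncomputable def pathWeight (k : α → α → ℝ≥0∞) {n : ℕ} (t : Fin (n + 1) → α) : ℝ≥0∞ :=
  ∏ j : Fin n, k (t j.castSucc) (t j.succ)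

@[simp]
lemma pathWeight_zero (t : Fin 1 → α) : pathWeight k t = 1 := by
  simp [pathWeight]

lemma pathWeight_snoc {n : ℕ} (t : Fin (n + 1) → α) (x : α) :
    pathWeight k (Fin.snoc t x : Fin (n + 2) → α) = pathWeight k t * k (t (Fin.last n)) x := by
  simp [pathWeight, Fin.prod_univ_castSucc, Fin.succ_castSucc, -Fin.castSucc_succ]

variable [MeasurableSpace α]

lemma measurable_pathWeight (hk : Measurable (Function.uncurry k)) (n : ℕ) :
    Measurable (pathWeight k (n := n)) :=
  Finset.measurable_prod _ fun j _ =>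
    hk.comp (f := fun t : Fin (n + 1) → α => (t j.castSucc, t j.succ))
      ((measurable_pi_apply j.castSucc).prodMk (measurable_pi_apply j.succ))

variable {μ : Measure α} [SigmaFinite μ]

lemma lintegral_pi_snoc {n : ℕ} {F : (Fin (n + 1) → α) → ℝ≥0∞} (hF : Measurable F) :
    ∫⁻ t, F t ∂(Measure.pi fun _ => μ) =
      ∫⁻ t, ∫⁻ x, F (Fin.snoc t x) ∂μ ∂(Measure.pi fun _ => μ) := by
  have e := (measurePreserving_piFinSuccAbove (fun _ : Fin (n + 1) => μ) (Fin.last n)).symm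
  rw [← e.lintegral_comp_emb (MeasurableEquiv.measurableEmbedding _)]
  refine (lintegral_prod_symm _ (hF.comp (MeasurableEquiv.measurable _)).aemeasurable).trans ?_
  simp [MeasurableEquiv.piFinSuccAbove, Fin.snocEquiv]

lemma lintegral_pathWeight_snoc_le {n : ℕ} (hk : Measurable (Function.uncurry k))
    {w v : α → ℝ≥0∞} (hw : Measurable w) (hv : Measurable v) {b : ℝ≥0∞}
    (hkw : ∀ᵐ s ∂μ, ∫⁻ x, k s x * w x ∂μ ≤ b * v s) :
    ∫⁻ t, pathWeight k t * w (t (Fin.last (n + 1))) ∂(Measure.pi fun _ => μ) ≤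
      b * ∫⁻ t, pathWeight k t * v (t (Fin.last n)) ∂(Measure.pi fun _ => μ) := by
  have hpw := measurable_pathWeight hk
  have hF : Measurable fun t : Fin (n + 2) → α => pathWeight k t * w (t (Fin.last (n + 1))) :=
    (hpw _).mul (hw.comp (measurable_pi_apply _))
  have hG : Measurable fun t : Fin (n + 1) → α => pathWeight k t * v (t (Fin.last n)) :=
    (hpw _).mul (hv.comp (measurable_pi_apply _))
  rw [lintegral_pi_snoc hF, ← lintegral_const_mul _ hG]
  refine lintegral_mono_ae ?_
  filter_upwards [Measure.tendsto_eval_ae_ae.eventually hkw] with t ht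
  calc _ = pathWeight k t * ∫⁻ x, k (t (Fin.last n)) x * w x ∂μ := by
        simp only [pathWeight_snoc, Fin.snoc_last, mul_assoc]
        exact lintegral_const_mul _ (hk.of_uncurry_left.mul hw)
    _ ≤ pathWeight k t * (b * v (t (Fin.last n))) := by gcongr
    _ = b * (pathWeight k t * v (t (Fin.last n))) := by ring

lemma lintegral_pathWeight_le_pow (hk : Measurable (Function.uncurry k)) {v : α → ℝ≥0∞}
    (hv : Measurable v) {b : ℝ≥0∞} (hkv : ∀ᵐ s ∂μ, ∫⁻ x, k s x * v x ∂μ ≤ b * v s) :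
    ∀ n : ℕ, ∫⁻ t, pathWeight k t * v (t (Fin.last n)) ∂(Measure.pi fun _ => μ) ≤
      b ^ n * ∫⁻ x, v x ∂μ
  | 0 => by
    simp only [pathWeight_zero, one_mul, pow_zero]
    exact ((measurePreserving_funUnique μ (Fin 1)).lintegral_comp_emb
      (MeasurableEquiv.measurableEmbedding _) v).le
  | n + 1 => calc
    _ ≤ b * ∫⁻ t, pathWeight k t * v (t (Fin.last n)) ∂(Measure.pi fun _ => μ) :=
      lintegral_pathWeight_snoc_le hk hv hv hkv
    _ ≤ b * (b ^ n * ∫⁻ x, v x ∂μ) := by gcongr; exact lintegral_pathWeight_le_pow hk hv hkv n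
    _ = b ^ (n + 1) * ∫⁻ x, v x ∂μ := by ring

end PathWeight

lemma lintegral_Ioc_rpow {a b r : ℝ} (ha : 0 ≤ a) (hab : a ≤ b) (hr : -1 < r ∨ r ≠ -1 ∧ 0 < a) :
    ∫⁻ t in Ioc a b, ENNReal.ofReal (t ^ r) =
      ENNReal.ofReal ((b ^ (r + 1) - a ^ (r + 1)) / (r + 1)) := by
  have h0 : -1 < r ∨ r ≠ -1 ∧ (0 : ℝ) ∉ uIcc a b :=
    hr.imp_right fun h => ⟨h.1, by rw [uIcc_of_le hab]; exact fun h0 => h.2.not_ge h0.1⟩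
  have hint : IntervalIntegrable (fun t : ℝ => t ^ r) volume a b := by
    rcases h0 with h | h
    · exact intervalIntegral.intervalIntegrable_rpow' h
    · exact intervalIntegral.intervalIntegrable_rpow (Or.inr h.2)
  rw [← integral_rpow h0, intervalIntegral.integral_of_le hab,
    ofReal_integral_eq_lintegral_ofReal ((intervalIntegrable_iff_integrableOn_Ioc_of_le hab).1 hint)]
  exact (ae_restrict_mem measurableSet_Ioc).mono fun t ht => rpow_nonneg (ha.trans ht.1.le) r

lemma one_sub_rpow_div_nonneg {s : ℝ} (hs0 : 0 < s) (hs1 : s ≤ 1) (a : ℝ) :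
    0 ≤ (1 - s ^ a) / a := by
  rcases lt_trichotomy a 0 with ha | rfl | ha
  · exact div_nonneg_of_nonpos
      (sub_nonpos.2 (one_le_rpow_of_pos_of_le_one_of_nonpos hs0 hs1 ha.le)) ha.le
  · simp
  · exact div_nonneg (sub_nonneg.2 (rpow_le_one hs0.le hs1 ha.le)) ha.le

noncomputable def prefAttachKernel (γ s t : ℝ) : ℝ≥0∞ :=
  ENNReal.ofReal (min s t ^ (-γ) * max s t ^ (γ - 1))

lemma measurable_prefAttachKernel (γ : ℝ) : Measurable (Function.uncurry (prefAttachKernel γ)) := by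
  unfold prefAttachKernel; fun_prop

lemma lintegral_prefAttachKernel_mul_rpow {γ w s : ℝ} (hw : -1 < w - γ) (hw' : w + γ ≠ 0)
    (hs : s ∈ Ioc (0 : ℝ) 1) :
    ∫⁻ t in Ioc 0 1, prefAttachKernel γ s t * ENNReal.ofReal (t ^ w) =
      ENNReal.ofReal (s ^ w / (w - γ + 1) + s ^ (-γ) * ((1 - s ^ (w + γ)) / (w + γ))) := by
  obtain ⟨hs0, hs1⟩ := hs
  rw [← Ioc_union_Ioc_eq_Ioc hs0.le hs1, lintegral_union measurableSet_Ioc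
      (Ioc_disjoint_Ioc_of_le le_rfl),
    ENNReal.ofReal_add (div_nonneg (rpow_nonneg hs0.le w) (by linarith))
      (mul_nonneg (rpow_nonneg hs0.le _) (one_sub_rpow_div_nonneg hs0 hs1 _))]
  congr 1
  · calc ∫⁻ t in Ioc 0 s, prefAttachKernel γ s t * ENNReal.ofReal (t ^ w)
        = ∫⁻ t in Ioc 0 s, ENNReal.ofReal (s ^ (γ - 1)) * ENNReal.ofReal (t ^ (w - γ)) := by
          refine setLIntegral_congr_fun measurableSet_Ioc fun t ⟨ht0, hts⟩ => ?_
          rw [prefAttachKernel, min_eq_right hts, max_eq_left hts, ← ENNReal.ofReal_mul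
            (mul_nonneg (rpow_nonneg ht0.le _) (rpow_nonneg hs0.le _)),
            ← ENNReal.ofReal_mul (rpow_nonneg hs0.le _), show w - γ = -γ + w by ring,
            rpow_add ht0]
          ring_nf
      _ = ENNReal.ofReal (s ^ w / (w - γ + 1)) := by
          rw [lintegral_const_mul' _ _ ENNReal.ofReal_ne_top,
            lintegral_Ioc_rpow le_rfl hs0.le (Or.inl hw), zero_rpow (by linarith), sub_zero,
            ← ENNReal.ofReal_mul (rpow_nonneg hs0.le _), ← mul_div_assoc, ← rpow_add hs0]
          ring_nf
  · calc ∫⁻ t in Ioc s 1, prefAttachKernel γ s t * ENNReal.ofReal (t ^ w)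
        = ∫⁻ t in Ioc s 1, ENNReal.ofReal (s ^ (-γ)) * ENNReal.ofReal (t ^ (w + γ - 1)) := by
          refine setLIntegral_congr_fun measurableSet_Ioc fun t ⟨hst, _⟩ => ?_
          have ht0 := hs0.trans hst
          rw [prefAttachKernel, min_eq_left hst.le, max_eq_right hst.le, ← ENNReal.ofReal_mul
            (mul_nonneg (rpow_nonneg hs0.le _) (rpow_nonneg ht0.le _)),
            ← ENNReal.ofReal_mul (rpow_nonneg hs0.le _), show w + γ - 1 = γ - 1 + w by ring,
            rpow_add ht0]
          ring_nf
      _ = ENNReal.ofReal (s ^ (-γ) * ((1 - s ^ (w + γ)) / (w + γ))) := by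
          rw [lintegral_const_mul' _ _ ENNReal.ofReal_ne_top,
            lintegral_Ioc_rpow hs0.le hs1 (Or.inr ⟨by contrapose! hw'; linarith, hs0⟩),
            ← ENNReal.ofReal_mul (rpow_nonneg hs0.le _), one_rpow, sub_add_cancel]

lemma lintegral_prefAttachKernel_le {γ s : ℝ} (hγ0 : 0 < γ) (hγ : γ < 1 / 2)
    (hs : s ∈ Ioc (0 : ℝ) 1) :
    ∫⁻ t in Ioc 0 1, prefAttachKernel γ s t ≤ 2 * ENNReal.ofReal (s ^ (-1 / 2 : ℝ)) := by
  have h := lintegral_prefAttachKernel_mul_rpow (w := 0) (by linarith) (by linarith) hs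
  simp only [rpow_zero, ENNReal.ofReal_one, mul_one, zero_sub, zero_add] at h
  obtain ⟨hs0, hs1⟩ := hs
  set u := s ^ (-1 / 2 : ℝ)
  have hu : 1 ≤ u := one_le_rpow_of_pos_of_le_one_of_nonpos hs0 hs1 (by norm_num)
  -- Bernoulli's inequality for the concave power `u ↦ u ^ (2γ)`
  have hbern : s ^ (-γ) ≤ 1 + 2 * γ * (u - 1) := by
    have := rpow_one_add_le_one_add_mul_self (s := u - 1) (p := 2 * γ) (by linarith)
      (by linarith) (by linarith)
    rwa [add_sub_cancel, ← rpow_mul hs0.le, show -1 / 2 * (2 * γ) = -γ by ring] at this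
  have hprod : s ^ (-γ) * s ^ γ = 1 := by rw [← rpow_add hs0, neg_add_cancel, rpow_zero]
  have hfirst : 1 / (-γ + 1) ≤ 2 := by rw [div_le_iff₀ (by linarith)]; linarith
  have hsecond : s ^ (-γ) * ((1 - s ^ γ) / γ) ≤ 2 * (u - 1) := by
    rw [← mul_div_assoc, mul_sub, mul_one, hprod, div_le_iff₀ hγ0]; nlinarith
  rw [h, ← ENNReal.ofReal_ofNat 2, ← ENNReal.ofReal_mul zero_le_two]
  exact ENNReal.ofReal_le_ofReal (by linarith)

lemma lintegral_prefAttachKernel_mul_rpow_le {γ s : ℝ} (hγ : γ < 1 / 2)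
    (hs : s ∈ Ioc (0 : ℝ) 1) :
    ∫⁻ t in Ioc 0 1, prefAttachKernel γ s t * ENNReal.ofReal (t ^ (-1 / 2 : ℝ)) ≤
      ENNReal.ofReal (4 / (1 - 2 * γ)) * ENNReal.ofReal (s ^ (-1 / 2 : ℝ)) := by
  have hd : 0 < 1 - 2 * γ := by linarith
  rw [lintegral_prefAttachKernel_mul_rpow (by linarith) (by linarith) hs,
    ← ENNReal.ofReal_mul (div_nonneg zero_le_four hd.le)]
  refine ENNReal.ofReal_le_ofReal ?_
  obtain ⟨hs0, hs1⟩ := hs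
  have hprod : s ^ (-γ) * s ^ (-1 / 2 + γ : ℝ) = s ^ (-1 / 2 : ℝ) := by
    rw [← rpow_add hs0]; congr 1; ring
  set u := s ^ (-1 / 2 : ℝ)
  have hfirst : u / (-1 / 2 - γ + 1) = 2 * u / (1 - 2 * γ) := by
    rw [div_eq_div_iff (by linarith) hd.ne']; ring
  have hsecond : s ^ (-γ) * ((1 - s ^ (-1 / 2 + γ : ℝ)) / (-1 / 2 + γ)) =
      2 * (u - s ^ (-γ)) / (1 - 2 * γ) := by
    rw [← mul_div_assoc, mul_sub, mul_one, hprod, div_eq_div_iff (by linarith) hd.ne']; ring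
  rw [hfirst, hsecond, ← add_div, div_mul_eq_mul_div, div_le_div_iff_of_pos_right hd]
  linarith [rpow_nonneg hs0.le (-γ)]

lemma setLIntegral_pi_Ioo_eq_lintegral_pathWeight (γ : ℝ) (n : ℕ) :
    ∫⁻ t in Set.pi univ (fun _ : Fin (n + 1) => Ioo (0 : ℝ) 1),
        ENNReal.ofReal (∏ j : Fin n,
          min (t j.castSucc) (t j.succ) ^ (-γ) * max (t j.castSucc) (t j.succ) ^ (γ - 1)) =
      ∫⁻ t, pathWeight (prefAttachKernel γ) t
        ∂(Measure.pi fun _ : Fin (n + 1) => volume.restrict (Ioc 0 1)) := by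
  rw [setLIntegral_congr_fun (MeasurableSet.univ_pi fun _ => measurableSet_Ioo)
      (g := pathWeight (prefAttachKernel γ)) fun t ht => ENNReal.ofReal_prod_of_nonneg
        fun j _ => mul_nonneg (rpow_nonneg (le_min (ht _ trivial).1.le (ht _ trivial).1.le) _)
          (rpow_nonneg ((ht _ trivial).1.le.trans (le_max_left _ _)) _),
    volume_pi, Measure.restrict_pi_pi, Measure.restrict_congr_set Ioo_ae_eq_Ioc]

/-- Key computation of Lemma 2.1: for `0 < γ < 1/2` and `n ≥ 1`, the iterated integral
`∫_0^1 dt_0 ⋯ ∫_0^1 dt_n ∏_{j=1}^n (t_{j-1} ∧ t_j)^(-γ) (t_{j-1} ∨ t_j)^(γ-1)`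
is at most `(4/(1-2γ))^n`. -/
theorem path_integral_bound (γ : ℝ) (hγ0 : 0 < γ) (hγ : γ < 1 / 2) (n : ℕ) (hn : 1 ≤ n) :
    ∫⁻ t in Set.pi Set.univ (fun _ : Fin (n + 1) => Set.Ioo (0 : ℝ) 1),
        ENNReal.ofReal (∏ j : Fin n,
          (min (t j.castSucc) (t j.succ)) ^ (-γ) *
            (max (t j.castSucc) (t j.succ)) ^ (γ - 1)) ≤
      ENNReal.ofReal ((4 / (1 - 2 * γ)) ^ n) := by
  obtain ⟨m, rfl⟩ := Nat.exists_eq_add_of_le' hn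
  rw [setLIntegral_pi_Ioo_eq_lintegral_pathWeight]
  set C := 4 / (1 - 2 * γ)
  set v : ℝ → ℝ≥0∞ := fun t => ENNReal.ofReal (t ^ (-1 / 2 : ℝ))
  have hK := measurable_prefAttachKernel γ
  have hbase : ∀ᵐ s ∂volume.restrict (Ioc 0 1),
      ∫⁻ t in Ioc 0 1, prefAttachKernel γ s t * 1 ≤ 2 * v s :=
    ae_restrict_of_forall_mem measurableSet_Ioc fun s hs => by
      simpa using lintegral_prefAttachKernel_le hγ0 hγ hs
  have hstep : ∀ᵐ s ∂volume.restrict (Ioc 0 1),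
      ∫⁻ t in Ioc 0 1, prefAttachKernel γ s t * v t ≤ ENNReal.ofReal C * v s :=
    ae_restrict_of_forall_mem measurableSet_Ioc fun s hs =>
      lintegral_prefAttachKernel_mul_rpow_le hγ hs
  have hv_int : ∫⁻ t in Ioc 0 1, v t = 2 := by
    rw [lintegral_Ioc_rpow le_rfl zero_le_one (Or.inl (by norm_num))]; norm_num
  have hC : 4 ≤ C := by rw [le_div_iff₀ (by linarith)]; nlinarith
  calc _ ≤ 2 * ∫⁻ t, pathWeight (prefAttachKernel γ) t * v (t (Fin.last m))
          ∂(Measure.pi fun _ => volume.restrict (Ioc 0 1)) := by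
        simpa using lintegral_pathWeight_snoc_le hK measurable_const (by fun_prop) hbase
    _ ≤ 2 * (ENNReal.ofReal C ^ m * 2) := by
        grw [lintegral_pathWeight_le_pow hK (by fun_prop) hstep m, hv_int]
    _ ≤ ENNReal.ofReal (C ^ (m + 1)) := by
        rw [← ENNReal.ofReal_pow (by linarith), ← ENNReal.ofReal_ofNat 2,
          ← ENNReal.ofReal_mul (by positivity), ← ENNReal.ofReal_mul zero_le_two, pow_succ']
        exact ENNReal.ofReal_le_ofReal (by nlinarith [pow_nonneg (zero_le_four.trans hC) m])
end

section
/- Let d ≥ 1 be an integer, β > 0, 0 < γ < 1, n ≥ 1 an integer, and let ρ : [0,∞) → [0,1] be measurable with ∫_{ℝ^d} ρ(|x|^d) dx = 1. Fix x_0 = 0 ∈ ℝ^d. Then ∫_0^1 dt_0 ∫_{(ℝ^d×(0,1])^n} ∏_{j=1}^n ρ(β^(−1)·(t_{j−1} ∨ t_j)^(1−γ)·(t_{j−1} ∧ t_j)^γ·|x_j − x_{j−1}|^d) ⊗_{j=1}^n d(x_j, t_j) = β^n · ∫_0^1 dt_0 ∫_0^1 dt_1 ⋯ ∫_0^1 dt_n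 ∏_{j=1}^n (t_{j−1} ∧ t_j)^(−γ)·(t_{j−1} ∨ t_j)^(γ−1). -/
/-!
Fix the times `t`. Translation invariance of Lebesgue measure lets one substitute
`y_j = x_j - x_{j-1}` one coordinate at a time, which factorises the spatial integral into
`∏ j, ∫ ρ (c_j ‖y‖^d) dy` with `c_j = g^pa(t_{j-1}, t_j)`. The dilation `y ↦ c_j^{1/d} • y`
turns each factor into `c_j⁻¹ ∫ ρ (‖z‖^d) dz = c_j⁻¹`, and
`c_j⁻¹ = β (t_{j-1} ∧ t_j)^(-γ) (t_{j-1} ∨ t_j)^(γ-1)`.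
-/

open MeasureTheory ENNReal Module

namespace MeasureTheory

section Increments

variable {E : Type*} [MeasurableSpace E]

theorem lintegral_pi_fin_succ_eq_lintegral_cons (μ : Measure E) [SigmaFinite μ] {n : ℕ}
    {F : (Fin (n + 1) → E) → ℝ≥0∞} (hF : Measurable F) :
    ∫⁻ x, F x ∂Measure.pi (fun _ => μ) =
      ∫⁻ x₀, ∫⁻ y, F (Fin.cons x₀ y) ∂Measure.pi (fun _ => μ) ∂μ := by
  have he := (measurePreserving_piFinSuccAbove (fun _ : Fin (n + 1) => μ) 0).symm
  rw [← he.lintegral_comp_emb (MeasurableEquiv.measurableEmbedding _)]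
  refine (lintegral_prod _ (hF.comp (MeasurableEquiv.measurable _)).aemeasurable).trans ?_
  simp [MeasurableEquiv.piFinSuccAbove, Fin.insertNthEquiv]

variable [AddGroup E] [MeasurableSub₂ E]

theorem measurable_prod_comp_cons_increments {n : ℕ} (a : E) {f : Fin n → E → ℝ≥0∞}
    (hf : ∀ j, Measurable (f j)) :
    Measurable fun x : Fin n → E =>
      ∏ j : Fin n, f j (x j - (Fin.cons a x : Fin (n + 1) → E) j.castSucc) := by
  have hcons : Measurable fun x : Fin n → E => (Fin.cons a x : Fin (n + 1) → E) :=
    measurable_pi_lambda _ fun i => Fin.cases measurable_const measurable_pi_apply i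
  exact Finset.measurable_prod _ fun j _ =>
    (hf j).comp ((measurable_pi_apply j).sub ((measurable_pi_apply _).comp hcons))

theorem lintegral_prod_comp_cons_increments [MeasurableAdd E] (μ : Measure E) [SigmaFinite μ]
    [μ.IsAddRightInvariant] (n : ℕ) (a : E) {f : Fin n → E → ℝ≥0∞}
    (hf : ∀ j, Measurable (f j)) :
    ∫⁻ x, ∏ j : Fin n, f j (x j - (Fin.cons a x : Fin (n + 1) → E) j.castSucc)
        ∂Measure.pi (fun _ => μ) =
      ∏ j, ∫⁻ y, f j y ∂μ := by
  induction n generalizing a with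
  | zero => simp
  | succ n ih =>
    rw [lintegral_pi_fin_succ_eq_lintegral_cons μ (measurable_prod_comp_cons_increments a hf)]
    simp only [Fin.prod_univ_succ (n := n), Fin.cons_zero, Fin.castSucc_zero, Fin.cons_succ,
      ← Fin.succ_castSucc]
    calc ∫⁻ x₀, ∫⁻ y, f 0 (x₀ - a) *
            ∏ j : Fin n, f j.succ (y j - (Fin.cons x₀ y : Fin (n + 1) → E) j.castSucc)
            ∂Measure.pi (fun _ => μ) ∂μ
        = ∫⁻ x₀, f 0 (x₀ - a) * ∏ j : Fin n, ∫⁻ y, f j.succ y ∂μ ∂μ := by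
          refine lintegral_congr fun x₀ => ?_
          rw [lintegral_const_mul _ (measurable_prod_comp_cons_increments x₀ fun j => hf j.succ),
            ih x₀ fun j => hf j.succ]
      _ = (∫⁻ y, f 0 y ∂μ) * ∏ j : Fin n, ∫⁻ y, f j.succ y ∂μ := by
          rw [lintegral_mul_const (f := fun x₀ => f 0 (x₀ - a)) _
              ((hf 0).comp (measurable_sub_const a)),
            lintegral_sub_right_eq_self]

end Increments

section Scaling

variable {E : Type*} [NormedAddCommGroup E] [NormedSpace ℝ E] [MeasurableSpace E] [BorelSpace E]
  [FiniteDimensional ℝ E] (μ : Measure E) [μ.IsAddHaarMeasure]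

theorem lintegral_comp_smul (g : E → ℝ≥0∞) {r : ℝ} (hr : r ≠ 0) :
    ∫⁻ x, g (r • x) ∂μ = ENNReal.ofReal |(r ^ finrank ℝ E)⁻¹| * ∫⁻ x, g x ∂μ := by
  rw [← smul_eq_mul, ← lintegral_smul_measure, ← Measure.map_addHaar_smul μ hr]
  exact (lintegral_map_equiv g (Homeomorph.smulOfNeZero r hr).toMeasurableEquiv).symm

theorem lintegral_comp_mul_norm_pow_finrank (hE : 0 < finrank ℝ E) (g : ℝ → ℝ≥0∞) {c : ℝ}
    (hc : 0 < c) :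
    ∫⁻ y, g (c * ‖y‖ ^ finrank ℝ E) ∂μ =
      ENNReal.ofReal c⁻¹ * ∫⁻ y, g (‖y‖ ^ finrank ℝ E) ∂μ := by
  set r := c ^ (finrank ℝ E : ℝ)⁻¹
  have hr : 0 < r := Real.rpow_pos_of_pos hc _
  have hrd : r ^ finrank ℝ E = c := by
    rw [← Real.rpow_natCast, ← Real.rpow_mul hc.le, inv_mul_cancel₀ (by positivity),
      Real.rpow_one]
  have hscale : ∀ y : E, ‖r • y‖ ^ finrank ℝ E = c * ‖y‖ ^ finrank ℝ E := fun y => by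
    rw [norm_smul, Real.norm_of_nonneg hr.le, mul_pow, hrd]
  simpa [hscale, hrd, abs_of_pos hc] using
    lintegral_comp_smul μ (fun y => g (‖y‖ ^ finrank ℝ E)) hr.ne'

theorem lintegral_ofReal_prod_comp_mul_norm_cons_increments (hE : 0 < finrank ℝ E) {ρ : ℝ → ℝ}
    (hρm : Measurable ρ) (hρ0 : ∀ r, 0 ≤ ρ r)
    (hρ_norm : ∫⁻ z, ENNReal.ofReal (ρ (‖z‖ ^ finrank ℝ E)) ∂μ = 1) {n : ℕ} {c : Fin n → ℝ}
    (hc : ∀ j, 0 < c j) :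
    ∫⁻ x, ENNReal.ofReal (∏ j : Fin n,
        ρ (c j * ‖x j - (Fin.cons 0 x : Fin (n + 1) → E) j.castSucc‖ ^ finrank ℝ E))
        ∂Measure.pi (fun _ => μ) =
      ∏ j, ENNReal.ofReal (c j)⁻¹ := by
  simp_rw [ENNReal.ofReal_prod_of_nonneg fun j _ => hρ0 _]
  rw [lintegral_prod_comp_cons_increments μ n 0
    (f := fun j y => ENNReal.ofReal (ρ (c j * ‖y‖ ^ finrank ℝ E))) fun j =>
      ENNReal.measurable_ofReal.comp (hρm.comp (measurable_const.mul (by fun_prop)))]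
  refine Finset.prod_congr rfl fun j _ => ?_
  rw [lintegral_comp_mul_norm_pow_finrank μ hE (fun r => ENNReal.ofReal (ρ r)) (hc j), hρ_norm,
    mul_one]

end Scaling

end MeasureTheory

theorem inv_mul_rpow_one_sub_mul_rpow (β γ : ℝ) {a b : ℝ} (ha : 0 ≤ a) (hb : 0 ≤ b) :
    (β⁻¹ * a ^ (1 - γ) * b ^ γ)⁻¹ = β * (b ^ (-γ) * a ^ (γ - 1)) := by
  rw [Real.rpow_neg hb, show γ - 1 = -(1 - γ) by ring, Real.rpow_neg ha]
  simp only [mul_inv, inv_inv]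
  ring

theorem prod_ofReal_inv_max_rpow_mul_min_rpow {β : ℝ} (hβ : 0 ≤ β) (γ : ℝ) {n : ℕ}
    {t : Fin (n + 1) → ℝ} (ht : ∀ i, 0 ≤ t i) :
    ∏ j : Fin n, ENNReal.ofReal (β⁻¹ * (max (t j.castSucc) (t j.succ)) ^ (1 - γ) *
        (min (t j.castSucc) (t j.succ)) ^ γ)⁻¹ =
      ENNReal.ofReal (β ^ n) * ENNReal.ofReal (∏ j : Fin n,
        (min (t j.castSucc) (t j.succ)) ^ (-γ) * (max (t j.castSucc) (t j.succ)) ^ (γ - 1)) := by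
  have hmax : ∀ j : Fin n, 0 ≤ max (t j.castSucc) (t j.succ) := fun j =>
    (ht _).trans (le_max_left _ _)
  have hmin : ∀ j : Fin n, 0 ≤ min (t j.castSucc) (t j.succ) := fun j => le_min (ht _) (ht _)
  simp_rw [inv_mul_rpow_one_sub_mul_rpow β γ (hmax _) (hmin _)]
  rw [← ofReal_prod_of_nonneg fun j _ => by have := hmax j; have := hmin j; positivity,
    ← ofReal_mul (by positivity), ← Finset.pow_card_mul_prod, Finset.card_univ, Fintype.card_fin]

theorem path_integral_spatial_reduction_general (d : ℕ) (hd : 1 ≤ d) (β γ : ℝ)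
    (hβ : 0 < β) (n : ℕ)
    (ρ : ℝ → ℝ) (hρm : Measurable ρ) (hρ0 : ∀ r, 0 ≤ ρ r)
    (hnorm : ∫ z : EuclideanSpace ℝ (Fin d), ρ (‖z‖ ^ d) = 1) :
    ∫⁻ t in Set.pi Set.univ (fun _ : Fin (n + 1) => Set.Ioc (0 : ℝ) 1),
      ∫⁻ x : Fin n → EuclideanSpace ℝ (Fin d),
        ENNReal.ofReal (∏ j : Fin n,
          ρ (β⁻¹ * (max (t j.castSucc) (t j.succ)) ^ (1 - γ) *
              (min (t j.castSucc) (t j.succ)) ^ γ *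
              ‖(Fin.cons 0 x : Fin (n + 1) → EuclideanSpace ℝ (Fin d)) j.succ -
                (Fin.cons 0 x : Fin (n + 1) → EuclideanSpace ℝ (Fin d)) j.castSucc‖ ^ d)) =
    ENNReal.ofReal ((β : ℝ) ^ n) *
      ∫⁻ t in Set.pi Set.univ (fun _ : Fin (n + 1) => Set.Ioc (0 : ℝ) 1),
        ENNReal.ofReal (∏ j : Fin n,
          (min (t j.castSucc) (t j.succ)) ^ (-γ) *
            (max (t j.castSucc) (t j.succ)) ^ (γ - 1)) := by
  have hE : 0 < finrank ℝ (EuclideanSpace ℝ (Fin d)) := by rw [finrank_euclideanSpace_fin]; omega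
  have hone : ∫⁻ z : EuclideanSpace ℝ (Fin d), ENNReal.ofReal (ρ (‖z‖ ^ d)) = 1 := by
    rw [← ofReal_integral_eq_lintegral_ofReal
      (Integrable.of_integral_ne_zero (by rw [hnorm]; exact one_ne_zero))
      (ae_of_all _ fun z => hρ0 _), hnorm, ofReal_one]
  rw [← lintegral_const_mul' _ _ ofReal_ne_top]
  refine setLIntegral_congr_fun (MeasurableSet.univ_pi fun _ => measurableSet_Ioc) fun t ht => ?_
  have hpos : ∀ i, 0 < t i := fun i => (ht i (Set.mem_univ i)).1
  have hc : ∀ j : Fin n, 0 < β⁻¹ * (max (t j.castSucc) (t j.succ)) ^ (1 - γ) *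
      (min (t j.castSucc) (t j.succ)) ^ γ := fun j => by
    have := hpos j.castSucc; have := hpos j.succ; positivity
  have key := lintegral_ofReal_prod_comp_mul_norm_cons_increments
    (volume : Measure (EuclideanSpace ℝ (Fin d))) hE hρm hρ0 (by simpa using hone) hc
  simp only [finrank_euclideanSpace_fin, ← volume_pi] at key
  simp only [Fin.cons_succ, key]
  exact prod_ofReal_inv_max_rpow_mul_min_rpow hβ.le γ fun i => (hpos i).le

/-- Expected number of labelled paths of length `n` in the weight-dependent random connection
model with preferential attachment kernel `g^pa(s,t) = β⁻¹ (s∨t)^(1-γ) (s∧t)^γ`: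
integrating out the spatial coordinates `x_1, …, x_n` (with `x_0 = 0`) via successive changes
of variables yields `β^n` times the purely temporal integral. -/
theorem path_integral_spatial_reduction (d : ℕ) (hd : 1 ≤ d) (β γ : ℝ)
    (hβ : 0 < β) (hγ0 : 0 < γ) (hγ1 : γ < 1) (n : ℕ) (hn : 1 ≤ n)
    (ρ : ℝ → ℝ) (hρm : Measurable ρ) (hρ0 : ∀ r, 0 ≤ ρ r) (hρ1 : ∀ r, ρ r ≤ 1)
    (hnorm : ∫ z : EuclideanSpace ℝ (Fin d), ρ (‖z‖ ^ d) = 1) :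
    ∫⁻ t in Set.pi Set.univ (fun _ : Fin (n + 1) => Set.Ioc (0 : ℝ) 1),
      ∫⁻ x : Fin n → EuclideanSpace ℝ (Fin d),
        ENNReal.ofReal (∏ j : Fin n,
          ρ (β⁻¹ * (max (t j.castSucc) (t j.succ)) ^ (1 - γ) *
              (min (t j.castSucc) (t j.succ)) ^ γ *
              ‖(Fin.cons 0 x : Fin (n + 1) → EuclideanSpace ℝ (Fin d)) j.succ -
                (Fin.cons 0 x : Fin (n + 1) → EuclideanSpace ℝ (Fin d)) j.castSucc‖ ^ d)) =
    ENNReal.ofReal ((β : ℝ) ^ n) *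
      ∫⁻ t in Set.pi Set.univ (fun _ : Fin (n + 1) => Set.Ioc (0 : ℝ) 1),
        ENNReal.ofReal (∏ j : Fin n,
          (min (t j.castSucc) (t j.succ)) ^ (-γ) *
            (max (t j.castSucc) (t j.succ)) ^ (γ - 1)) :=
  path_integral_spatial_reduction_general d hd β γ hβ n ρ hρm hρ0 hnorm
end

section
/- Let γ ∈ (0,1), let t_0 ∈ (0,1), and let k ≥ 1 be an integer. Then the iterated integral ∫_{t_0}^1 dt_1 ∫_{t_1}^1 dt_2 ⋯ ∫_{t_{k−1}}^1 dt_k of t_0^(−γ) · (∏_{j=1}^{k−1} t_j^(−1)) · t_k^(γ−1) is at most t_0^(−γ) · (log(1/t_0))^(k−1) / (γ · (k−1)!). -/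
open MeasureTheory Set Function
open scoped ENNReal Nat

/-!
Dropping the constraint `t_{k-1} < t_k` bounds the integral by `t₀^(-γ)` times the integral of
`∏_{j<k} t_j⁻¹` over the ordered simplex `t₀ < t_1 < ⋯ < t_{k-1} < 1` times
`∫_{t₀}^1 t^(γ-1) dt ≤ 1/γ`. The `(k-1)!` coordinate permutations carry the simplex onto pairwise
disjoint subsets of the cube `(t₀, 1)^(k-1)` and preserve the symmetric integrand, so the simplex
integral is at most `(∫_{t₀}^1 dt/t)^(k-1) / (k-1)! = log(1/t₀)^(k-1) / (k-1)!`.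
-/

variable {α : Type*}

def increasingTuples [Preorder α] (n : ℕ) (s : Set α) : Set (Fin n → α) :=
  {t | StrictMono t ∧ ∀ i, t i ∈ s}

theorem pairwise_disjoint_setOf_strictMono_comp_perm [LinearOrder α] (n : ℕ) :
    Pairwise (Disjoint on fun σ : Equiv.Perm (Fin n) => {t : Fin n → α | StrictMono (t ∘ σ)}) := by
  intro σ τ hστ
  refine Set.disjoint_left.2 fun t (hσ : StrictMono (t ∘ σ)) (hτ : StrictMono (t ∘ τ)) => hστ ?_
  have ht : Injective t := (σ.injective_comp t).1 hσ.injective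
  have hcomp : t ∘ σ = t ∘ τ := (hσ.range_inj hτ).1 (by simp [Set.range_comp])
  exact Equiv.ext fun i => ht (congrFun hcomp i)

section Measure

variable [MeasurableSpace α] (μ : Measure α) [SigmaFinite μ]

theorem lintegral_fin_prod_eq_pow {g : α → ℝ≥0∞} (hg : Measurable g) (n : ℕ) :
    ∫⁻ t, ∏ i, g (t i) ∂Measure.pi (fun _ : Fin n => μ) = (∫⁻ x, g x ∂μ) ^ n := by
  induction n with
  | zero => simp
  | succ n ih =>
    rw [← ((measurePreserving_piFinSuccAbove (fun _ => μ) 0).symm).lintegral_comp_emb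
      (MeasurableEquiv.measurableEmbedding _)]
    simp_rw [MeasurableEquiv.piFinSuccAbove_symm_apply, Fin.insertNthEquiv,
      Fin.prod_univ_succ, Fin.insertNth_zero]
    simp only [Equiv.coe_fn_mk, Fin.cons_zero, Fin.cons_succ, cast_eq]
    rw [lintegral_prod_mul (g := fun y : Fin n → α => ∏ i, g (y i)) hg.aemeasurable
      (Finset.measurable_prod _ fun i _ => hg.comp (measurable_pi_apply i)).aemeasurable,
      ih, pow_succ']

theorem setLIntegral_comp_perm {ι : Type*} [Fintype ι] (σ : Equiv.Perm ι)
    (F : (ι → α) → ℝ≥0∞) (A : Set (ι → α)) :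
    ∫⁻ t in (· ∘ σ) ⁻¹' A, F (t ∘ σ) ∂Measure.pi (fun _ => μ) =
      ∫⁻ t in A, F t ∂Measure.pi (fun _ => μ) := by
  have he : ⇑(MeasurableEquiv.piCongrLeft (fun _ : ι => α) σ.symm) = (· ∘ σ) := by
    ext t i; simp [MeasurableEquiv.coe_piCongrLeft, Equiv.piCongrLeft_apply]
  simpa [he] using
    (measurePreserving_piCongrLeft (fun _ => μ) σ.symm).setLIntegral_comp_preimage_emb
      (MeasurableEquiv.measurableEmbedding _) F A

theorem setLIntegral_increasingTuples_succ_le [Preorder α] {n : ℕ}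
    {f : (Fin n → α) → ℝ≥0∞} (hf : Measurable f) {h : α → ℝ≥0∞} (hh : Measurable h)
    (s : Set α) :
    ∫⁻ t in increasingTuples (n + 1) s, f (Fin.init t) * h (t (Fin.last n))
        ∂Measure.pi (fun _ => μ) ≤
      (∫⁻ y in increasingTuples n s, f y ∂Measure.pi (fun _ => μ)) * ∫⁻ x in s, h x ∂μ := by
  set e := MeasurableEquiv.piFinSuccAbove (fun _ => α) (Fin.last n)
  have he : ∀ t, e t = (t (Fin.last n), Fin.init t) := fun t => by
    ext <;> simp [e, MeasurableEquiv.piFinSuccAbove, Fin.init]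
  have hsub : increasingTuples (n + 1) s ⊆ e ⁻¹' (s ×ˢ increasingTuples n s) := by
    rintro t ⟨hmono, hmem⟩
    rw [mem_preimage, he]
    exact ⟨hmem _, hmono.comp Fin.strictMono_castSucc, fun i => hmem _⟩
  calc ∫⁻ t in increasingTuples (n + 1) s, f (Fin.init t) * h (t (Fin.last n))
        ∂Measure.pi (fun _ => μ)
      ≤ ∫⁻ t in e ⁻¹' (s ×ˢ increasingTuples n s), (fun p => h p.1 * f p.2) (e t)
        ∂Measure.pi (fun _ => μ) := by
        simp only [he, mul_comm (h _)]
        exact lintegral_mono_set hsub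
    _ = ∫⁻ p in s ×ˢ increasingTuples n s, h p.1 * f p.2 ∂μ.prod (Measure.pi fun _ => μ) :=
        (measurePreserving_piFinSuccAbove (fun _ => μ) _).setLIntegral_comp_preimage_emb
          e.measurableEmbedding (fun p : α × (Fin n → α) => h p.1 * f p.2) _
    _ = _ := by
        rw [← Measure.prod_restrict, lintegral_prod_mul hh.aemeasurable hf.aemeasurable, mul_comm]

variable [LinearOrder α] [TopologicalSpace α] [OrderClosedTopology α]
  [SecondCountableTopology α] [OpensMeasurableSpace α]

theorem measurableSet_setOf_strictMono (n : ℕ) :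
    MeasurableSet {t : Fin n → α | StrictMono t} := by
  have : {t : Fin n → α | StrictMono t} = ⋂ (i) (j) (_ : i < j), {t | t i < t j} := by
    ext; simp [StrictMono]
  rw [this]
  exact .iInter fun i => .iInter fun j => .iInter fun _ =>
    measurableSet_lt (measurable_pi_apply i) (measurable_pi_apply j)

theorem measurableSet_increasingTuples (n : ℕ) {s : Set α} (hs : MeasurableSet s) :
    MeasurableSet (increasingTuples n s) := by
  have : increasingTuples n s = {t | StrictMono t} ∩ univ.pi fun _ => s := by
    ext; simp [increasingTuples]
  rw [this]
  exact (measurableSet_setOf_strictMono n).inter (.univ_pi fun _ => hs)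

theorem setLIntegral_increasingTuples_prod_le {g : α → ℝ≥0∞} (hg : Measurable g) {s : Set α}
    (hs : MeasurableSet s) (n : ℕ) :
    ∫⁻ t in increasingTuples n s, ∏ i, g (t i) ∂Measure.pi (fun _ => μ) ≤
      (∫⁻ x in s, g x ∂μ) ^ n / n ! := by
  set ν := Measure.pi fun _ : Fin n => μ
  set F : (Fin n → α) → ℝ≥0∞ := fun t => ∏ i, g (t i)
  set A : Equiv.Perm (Fin n) → Set (Fin n → α) := fun σ => (· ∘ σ) ⁻¹' increasingTuples n s
  have hA : ∀ σ, ∫⁻ t in A σ, F t ∂ν = ∫⁻ t in increasingTuples n s, F t ∂ν := fun σ => by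
    have hF : ∀ t, F (t ∘ σ) = F t := fun t => Equiv.prod_comp σ fun i => g (t i)
    simpa only [hF] using setLIntegral_comp_perm μ σ F (increasingTuples n s)
  have hAm : ∀ σ, MeasurableSet (A σ) := fun σ =>
    (measurableSet_increasingTuples n hs).preimage (by fun_prop)
  have hAd : Pairwise (Disjoint on A) :=
    (pairwise_disjoint_setOf_strictMono_comp_perm n).mono fun σ τ h =>
      h.mono (fun _ ht => ht.1) (fun _ ht => ht.1)
  have hAcube : (⋃ σ, A σ) ⊆ univ.pi fun _ => s :=
    iUnion_subset fun σ t ht => mem_univ_pi.2 fun i => by simpa using ht.2 (σ.symm i)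
  rw [ENNReal.le_div_iff_mul_le (by simp [Nat.factorial_ne_zero]) (by simp), mul_comm]
  calc (n ! : ℝ≥0∞) * ∫⁻ t in increasingTuples n s, F t ∂ν
      = ∑ σ, ∫⁻ t in A σ, F t ∂ν := by simp [hA, Fintype.card_perm]
    _ = ∫⁻ t in ⋃ σ, A σ, F t ∂ν := by rw [lintegral_iUnion hAm hAd, tsum_fintype]
    _ ≤ ∫⁻ t in univ.pi fun _ => s, F t ∂ν := lintegral_mono_set hAcube
    _ = (∫⁻ x in s, g x ∂μ) ^ n := by
      rw [Measure.restrict_pi_pi, lintegral_fin_prod_eq_pow _ hg]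

end Measure

theorem setLIntegral_Ioo_ofReal_eq_intervalIntegral {f : ℝ → ℝ} {a b : ℝ} (hab : a ≤ b)
    (hf : ContinuousOn f (Icc a b)) (hf₀ : ∀ x ∈ Ioo a b, 0 ≤ f x) :
    ∫⁻ x in Ioo a b, ENNReal.ofReal (f x) = ENNReal.ofReal (∫ x in a..b, f x) := by
  rw [intervalIntegral.integral_of_le hab, integral_Ioc_eq_integral_Ioo,
    ofReal_integral_eq_lintegral_ofReal (hf.integrableOn_Icc.mono_set Ioo_subset_Icc_self)
      (ae_restrict_of_forall_mem measurableSet_Ioo hf₀)]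

theorem setLIntegral_Ioo_ofReal_inv {a b : ℝ} (ha : 0 < a) (hab : a ≤ b) :
    ∫⁻ x in Ioo a b, ENNReal.ofReal x⁻¹ = ENNReal.ofReal (Real.log (b / a)) := by
  have h0 : (0 : ℝ) ∉ uIcc a b := by simp [uIcc_of_le hab, ha.not_ge]
  rw [setLIntegral_Ioo_ofReal_eq_intervalIntegral hab
    (continuousOn_inv₀.mono fun x hx => (ha.trans_le hx.1).ne')
    (fun x hx => inv_nonneg.2 (ha.trans hx.1).le), integral_inv h0]

theorem setLIntegral_Ioo_ofReal_rpow {a b r : ℝ} (ha : 0 < a) (hab : a ≤ b) (hr : r ≠ -1) :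
    ∫⁻ x in Ioo a b, ENNReal.ofReal (x ^ r) =
      ENNReal.ofReal ((b ^ (r + 1) - a ^ (r + 1)) / (r + 1)) := by
  have h0 : (0 : ℝ) ∉ uIcc a b := by simp [uIcc_of_le hab, ha.not_ge]
  rw [setLIntegral_Ioo_ofReal_eq_intervalIntegral (f := (· ^ r)) hab
    (continuousOn_id.rpow_const fun x hx => .inl (ha.trans_le hx.1).ne')
    (fun x hx => Real.rpow_nonneg (ha.trans hx.1).le r), integral_rpow (.inr ⟨hr, h0⟩)]

theorem setLIntegral_Ioo_ofReal_rpow_sub_one_le {a γ : ℝ} (ha : 0 < a) (ha₁ : a ≤ 1)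
    (hγ : 0 < γ) :
    ∫⁻ x in Ioo a 1, ENNReal.ofReal (x ^ (γ - 1)) ≤ ENNReal.ofReal (1 / γ) := by
  rw [setLIntegral_Ioo_ofReal_rpow ha ha₁ (by linarith), sub_add_cancel, Real.one_rpow]
  exact ENNReal.ofReal_le_ofReal
    (div_le_div_of_nonneg_right (by linarith [Real.rpow_nonneg ha.le γ]) hγ.le)

theorem setLIntegral_increasingTuples_prod_ofReal_inv_le {a b : ℝ} (ha : 0 < a) (hab : a ≤ b)
    (n : ℕ) :
    ∫⁻ t in increasingTuples n (Ioo a b), ∏ i, ENNReal.ofReal (t i)⁻¹ ≤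
      ENNReal.ofReal (Real.log (b / a)) ^ n / n ! := by
  rw [← setLIntegral_Ioo_ofReal_inv ha hab]
  exact setLIntegral_increasingTuples_prod_le volume (by fun_prop) measurableSet_Ioo n

theorem ofReal_mul_prod_ite_eq {n : ℕ} {c r : ℝ} (hc : 0 ≤ c) {t : Fin (n + 1) → ℝ}
    (ht : ∀ i, 0 ≤ t i) :
    ENNReal.ofReal (c * ∏ j : Fin (n + 1), if (j : ℕ) < n then (t j)⁻¹ else t j ^ r) =
      ENNReal.ofReal c *
        ((∏ i, ENNReal.ofReal (Fin.init t i)⁻¹) * ENNReal.ofReal (t (Fin.last n) ^ r)) := by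
  rw [Fin.prod_univ_castSucc, ENNReal.ofReal_mul hc,
    ENNReal.ofReal_mul (Finset.prod_nonneg fun i _ => by simp [ht]),
    ENNReal.ofReal_prod_of_nonneg fun i _ => by simp [ht]]
  simp [Fin.init]

/-- Lemma A.1(a): for `γ ∈ (0,1)`, `t₀ ∈ (0,1)` and `k ≥ 1`, the iterated integral
`∫_{t₀}^1 dt_1 ⋯ ∫_{t_{k-1}}^1 dt_k  t₀^(-γ) (∏_{j=1}^{k-1} t_j^(-1)) t_k^(γ-1)`
(i.e. the integral over the region `t₀ < t_1 < ⋯ < t_k < 1`)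
is at most `t₀^(-γ) (log(1/t₀))^(k-1) / (γ (k-1)!)`. -/
theorem increasing_skeleton_integral (γ t₀ : ℝ) (hγ : γ ∈ Set.Ioo (0 : ℝ) 1)
    (ht₀ : t₀ ∈ Set.Ioo (0 : ℝ) 1) (k : ℕ) (hk : 1 ≤ k) :
    ∫⁻ t in {t : Fin k → ℝ | StrictMono t ∧ ∀ i, t i ∈ Set.Ioo t₀ 1},
        ENNReal.ofReal (t₀ ^ (-γ) *
          ∏ j : Fin k, (if (j : ℕ) < k - 1 then (t j)⁻¹ else (t j) ^ (γ - 1))) ≤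
      ENNReal.ofReal (t₀ ^ (-γ) * Real.log (1 / t₀) ^ (k - 1) /
        (γ * (Nat.factorial (k - 1) : ℝ))) := by
  obtain ⟨n, rfl⟩ : ∃ n, k = n + 1 := ⟨k - 1, by omega⟩
  obtain ⟨hγ₀, -⟩ := hγ
  obtain ⟨ht₀, ht₁⟩ := ht₀
  simp only [Nat.add_sub_cancel]
  change ∫⁻ t in increasingTuples (n + 1) (Ioo t₀ 1), _ ≤ _
  have hc : 0 ≤ t₀ ^ (-γ) := Real.rpow_nonneg ht₀.le _
  have hL : 0 ≤ Real.log (1 / t₀) := Real.log_nonneg (one_le_one_div ht₀ ht₁.le)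
  calc _ = ENNReal.ofReal (t₀ ^ (-γ)) * ∫⁻ t in increasingTuples (n + 1) (Ioo t₀ 1),
          (∏ i, ENNReal.ofReal (Fin.init t i)⁻¹) * ENNReal.ofReal (t (Fin.last n) ^ (γ - 1)) := by
        rw [← lintegral_const_mul' _ _ ENNReal.ofReal_ne_top]
        exact setLIntegral_congr_fun (measurableSet_increasingTuples _ measurableSet_Ioo)
          fun t ht => ofReal_mul_prod_ite_eq hc fun i => (ht₀.trans (ht.2 i).1).le
    _ ≤ ENNReal.ofReal (t₀ ^ (-γ)) *
          (ENNReal.ofReal (Real.log (1 / t₀)) ^ n / n ! * ENNReal.ofReal (1 / γ)) := by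
        gcongr
        refine (setLIntegral_increasingTuples_succ_le volume ?_ ?_ _).trans
          (mul_le_mul' (setLIntegral_increasingTuples_prod_ofReal_inv_le ht₀ ht₁.le n)
            (setLIntegral_Ioo_ofReal_rpow_sub_one_le ht₀ ht₁.le hγ₀))
        all_goals fun_prop
    _ = _ := by
        rw [← ENNReal.ofReal_pow hL, ← ENNReal.ofReal_natCast,
          ← ENNReal.ofReal_div_of_pos (by positivity), ← ENNReal.ofReal_mul (by positivity),
          ← ENNReal.ofReal_mul hc]
        congr 1
        field_simp
end

section
/- Let γ ∈ (0,1) and let k ≥ 1 be an integer. Then the iterated integral ∫_0^1 dt_0 ∫_0^{t_0} dt_1 ⋯ ∫_0^{t_{k−1}} dt_k of t_0^(γ−1) · (∏_{j=1}^{k−1} t_j^(−1)) · t_k^(−γ) is at most (1/(1−γ))^k. -/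
/-!
Slicing off the largest coordinate `t 0 = x` turns an integral over the simplex
`a > t 0 > ⋯ > t n > 0` into `∫_0^a` of an integral over the simplex below `x`. For
`J_n(a) = ∫ t_0⁻¹ ⋯ t_{n-1}⁻¹ t_n^(-γ)` over that simplex this gives
`J_0(a) = a^(1-γ)/(1-γ)` and `J_{n+1}(a) = ∫_0^a x⁻¹ J_n(x) dx`, hence
`J_n(a) = a^(1-γ)/(1-γ)^(n+1)`. In the theorem the outer factor `t_0^(γ-1)` cancels
`t_0^(1-γ)`, so the bound even holds with equality.
-/

open MeasureTheory Set ENNReal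

def decreasingSimplex (n : ℕ) (a : ℝ) : Set (Fin n → ℝ) :=
  {t | StrictAnti t ∧ ∀ i, t i ∈ Ioo 0 a}

theorem measurableSet_decreasingSimplex (n : ℕ) (a : ℝ) :
    MeasurableSet (decreasingSimplex n a) := by
  simp only [decreasingSimplex, StrictAnti, ofPred_and, ofPred_forall]
  measurability

theorem Fin.strictAnti_cons {α : Type*} [Preorder α] {n : ℕ} {a : α} {f : Fin n → α} :
    StrictAnti (Fin.cons a f : Fin (n + 1) → α) ↔ (∀ i, f i < a) ∧ StrictAnti f :=
  Fin.liftFun_cons (· > ·)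

theorem cons_mem_decreasingSimplex_iff {n : ℕ} {a x : ℝ} {y : Fin n → ℝ} :
    (Fin.cons x y : Fin (n + 1) → ℝ) ∈ decreasingSimplex (n + 1) a ↔
      x ∈ Ioo 0 a ∧ y ∈ decreasingSimplex n x := by
  simp only [decreasingSimplex, mem_ofPred_eq, Fin.strictAnti_cons, Fin.forall_fin_succ,
    Fin.cons_zero, Fin.cons_succ, mem_Ioo]
  grind

theorem lintegral_fin_succ_cons {α : Type*} [MeasureSpace α] [SigmaFinite (volume : Measure α)]
    {n : ℕ} {f : (Fin (n + 1) → α) → ℝ≥0∞} (hf : Measurable f) :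
    ∫⁻ t, f t = ∫⁻ x, ∫⁻ y : Fin n → α, f (Fin.cons x y) := by
  let e := MeasurableEquiv.piFinSuccAbove (fun _ : Fin (n + 1) => α) 0
  rw [← (volume_preserving_piFinSuccAbove (fun _ : Fin (n + 1) => α) 0).symm.lintegral_comp hf,
    Measure.volume_eq_prod]
  refine (lintegral_prod (μ := (volume : Measure α)) (ν := (volume : Measure (Fin n → α))) _
    (hf.comp e.symm.measurable).aemeasurable).trans ?_
  simp [e, MeasurableEquiv.piFinSuccAbove_symm_apply, Fin.consEquiv]

theorem setLIntegral_decreasingSimplex_succ {n : ℕ} (a : ℝ) {f : (Fin (n + 1) → ℝ) → ℝ≥0∞}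
    (hf : Measurable f) :
    ∫⁻ t in decreasingSimplex (n + 1) a, f t =
      ∫⁻ x in Ioo 0 a, ∫⁻ y in decreasingSimplex n x, f (Fin.cons x y) := by
  rw [← lintegral_indicator (measurableSet_decreasingSimplex _ _),
    lintegral_fin_succ_cons (hf.indicator (measurableSet_decreasingSimplex _ _)),
    ← lintegral_indicator measurableSet_Ioo]
  congr 1 with x
  by_cases hx : x ∈ Ioo 0 a
  · rw [indicator_of_mem hx, ← lintegral_indicator (measurableSet_decreasingSimplex _ _)]
    congr 1 with y
    by_cases hy : y ∈ decreasingSimplex n x <;> simp [cons_mem_decreasingSimplex_iff, hx, hy]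
  · simp [cons_mem_decreasingSimplex_iff, hx]

theorem lintegral_Ioo_rpow {r a : ℝ} (hr : -1 < r) (ha : 0 ≤ a) :
    ∫⁻ x in Ioo 0 a, ENNReal.ofReal (x ^ r) = ENNReal.ofReal (a ^ (r + 1) / (r + 1)) := by
  have hint : IntegrableOn (fun x : ℝ => x ^ r) (Ioo 0 a) :=
    (intervalIntegral.intervalIntegrable_rpow' hr).1.mono_set Ioo_subset_Ioc_self
  rw [← ofReal_integral_eq_lintegral_ofReal hint
      ((ae_restrict_mem measurableSet_Ioo).mono fun x hx => Real.rpow_nonneg hx.1.le _),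
    ← integral_Ioc_eq_integral_Ioo, ← intervalIntegral.integral_of_le ha,
    integral_rpow (Or.inl hr), Real.zero_rpow (by linarith), sub_zero]

noncomputable def skeletonWeight (γ : ℝ) (n : ℕ) (t : Fin (n + 1) → ℝ) : ℝ :=
  (∏ j : Fin n, (t j.castSucc)⁻¹) * t (Fin.last n) ^ (-γ)

theorem measurable_skeletonWeight (γ : ℝ) (n : ℕ) : Measurable (skeletonWeight γ n) := by
  unfold skeletonWeight
  fun_prop

theorem skeletonWeight_zero (γ : ℝ) (t : Fin 1 → ℝ) : skeletonWeight γ 0 t = t 0 ^ (-γ) := by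
  simp [skeletonWeight]

theorem skeletonWeight_cons (γ x : ℝ) {n : ℕ} (y : Fin (n + 1) → ℝ) :
    skeletonWeight γ (n + 1) (Fin.cons x y) = x⁻¹ * skeletonWeight γ n y := by
  simp [skeletonWeight, Fin.prod_univ_succ, mul_assoc, mul_left_comm]

theorem setLIntegral_skeletonWeight {γ : ℝ} (hγ : γ < 1) (n : ℕ) {a : ℝ} (ha : 0 < a) :
    ∫⁻ t in decreasingSimplex (n + 1) a, ENNReal.ofReal (skeletonWeight γ n t) =
      ENNReal.ofReal (a ^ (1 - γ) * (1 / (1 - γ)) ^ (n + 1)) := by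
  have hr : -1 < -γ := by linarith
  induction n generalizing a with
  | zero =>
    rw [setLIntegral_decreasingSimplex_succ a (measurable_skeletonWeight γ 0).ennreal_ofReal]
    have h_univ (x : ℝ) : decreasingSimplex 0 x = univ := by
      ext; simp [decreasingSimplex, Subsingleton.strictAnti]
    simp only [skeletonWeight_zero, Fin.cons_zero, h_univ, Measure.restrict_univ,
      lintegral_const, volume_pi, Measure.pi_empty_univ, mul_one]
    rw [lintegral_Ioo_rpow hr ha.le, neg_add_eq_sub]
    ring_nf
  | succ n ih =>
    rw [setLIntegral_decreasingSimplex_succ a (measurable_skeletonWeight γ _).ennreal_ofReal]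
    calc ∫⁻ x in Ioo 0 a, ∫⁻ y in decreasingSimplex (n + 1) x,
            ENNReal.ofReal (skeletonWeight γ (n + 1) (Fin.cons x y))
        = ∫⁻ x in Ioo 0 a,
            ENNReal.ofReal (x ^ (-γ)) * ENNReal.ofReal ((1 / (1 - γ)) ^ (n + 1)) := by
          refine setLIntegral_congr_fun measurableSet_Ioo fun x hx => ?_
          simp_rw [skeletonWeight_cons, ENNReal.ofReal_mul (inv_nonneg.2 hx.1.le)]
          rw [lintegral_const_mul' _ _ ofReal_ne_top, ih hx.1,
            ← ENNReal.ofReal_mul (inv_nonneg.2 hx.1.le),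
            ← ENNReal.ofReal_mul (Real.rpow_nonneg hx.1.le _)]
          congr 1
          rw [← mul_assoc, ← Real.rpow_neg_one, ← Real.rpow_add hx.1]
          ring_nf
      _ = ENNReal.ofReal (a ^ (1 - γ) * (1 / (1 - γ)) ^ (n + 1 + 1)) := by
          rw [lintegral_mul_const' _ _ ofReal_ne_top, lintegral_Ioo_rpow hr ha.le,
            ← ENNReal.ofReal_mul (div_nonneg (Real.rpow_nonneg ha.le _) (by linarith))]
          congr 1
          rw [neg_add_eq_sub]
          ring

/-- Lemma A.5: for `γ ∈ (0,1)` and `k ≥ 1`, the iterated integral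
`∫_0^1 dt_0 ∫_0^{t_0} dt_1 ⋯ ∫_0^{t_{k-1}} dt_k  t_0^(γ-1) (∏_{j=1}^{k-1} t_j^(-1)) t_k^(-γ)`
(i.e. the integral over the region `0 < t_k < ⋯ < t_1 < t_0 < 1`)
is at most `(1/(1-γ))^k`. -/
theorem decreasing_skeleton_integral_bound (γ : ℝ) (hγ : γ ∈ Set.Ioo (0 : ℝ) 1)
    (k : ℕ) (hk : 1 ≤ k) :
    ∫⁻ t in {t : Fin (k + 1) → ℝ | StrictAnti t ∧ ∀ i, t i ∈ Set.Ioo (0 : ℝ) 1},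
        ENNReal.ofReal (t 0 ^ (γ - 1) *
          (∏ j : Fin (k + 1), if 0 < (j : ℕ) ∧ (j : ℕ) < k then (t j)⁻¹ else 1) *
          t (Fin.last k) ^ (-γ)) ≤
      ENNReal.ofReal ((1 / (1 - γ)) ^ k) := by
  obtain ⟨n, rfl⟩ := Nat.exists_eq_add_of_le' hk
  have h_cons (x : ℝ) (y : Fin (n + 1) → ℝ) :
      (Fin.cons x y : Fin (n + 2) → ℝ) 0 ^ (γ - 1) *
        (∏ j : Fin (n + 2), if 0 < (j : ℕ) ∧ (j : ℕ) < n + 1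
          then ((Fin.cons x y : Fin (n + 2) → ℝ) j)⁻¹ else 1) *
        (Fin.cons x y : Fin (n + 2) → ℝ) (Fin.last (n + 1)) ^ (-γ) =
      x ^ (γ - 1) * skeletonWeight γ n y := by
    rw [Fin.prod_univ_succ, Fin.prod_univ_castSucc]
    simp [skeletonWeight, mul_assoc]
  have h_meas : Measurable fun t : Fin (n + 2) → ℝ =>
      ∏ j : Fin (n + 2), if 0 < (j : ℕ) ∧ (j : ℕ) < n + 1 then (t j)⁻¹ else 1 :=
    Finset.measurable_prod _ fun j _ => by split_ifs <;> fun_prop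
  refine (setLIntegral_decreasingSimplex_succ 1 (by fun_prop)).trans_le (le_of_eq ?_)
  calc ∫⁻ x in Ioo 0 1, ∫⁻ y in decreasingSimplex (n + 1) x, _
      = ∫⁻ x in Ioo (0 : ℝ) 1, ENNReal.ofReal ((1 / (1 - γ)) ^ (n + 1)) := by
        refine setLIntegral_congr_fun measurableSet_Ioo fun x hx => ?_
        simp_rw [h_cons, ENNReal.ofReal_mul (Real.rpow_nonneg hx.1.le _)]
        rw [lintegral_const_mul' _ _ ofReal_ne_top, setLIntegral_skeletonWeight hγ.2 n hx.1,
          ← ENNReal.ofReal_mul (Real.rpow_nonneg hx.1.le _), ← mul_assoc, ← Real.rpow_add hx.1]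
        norm_num
    _ = ENNReal.ofReal ((1 / (1 - γ)) ^ (n + 1)) := by simp
end
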